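/- The storage feasible set B is nonempty if and only if for every t, charging at maximal allowed power reaches at least S̲_t and charging at minimal allowed power stays below S̄_t; formally, B ≠ ∅ iff the greedy maximal trajectory satisfies all lower energy bounds and the greedy minimal trajectory satisfies all upper energy bounds, under the additional assumptions x̲ ≤ x̄ and that the interval bounds [S̲_t, S̄_t] are consistent, i.e., for each t, max(S̲_t, α S̲_{t-1} + x̲_t Δt) ≤ min(S̄_t, α S̄_{t-1} + x̄_t Δt) holds along the greedy trajectories. -/

import Mathlib

/-!
Every feasible trajectory lies between the greedy ones, `S⁻_t ≤ S_t ≤ S⁺_t`, which gives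
necessity. Conversely, the greedy conditions force `S⁻_t ≤ S⁺_t`, and every
`s ∈ [S⁻_{t+1}, S⁺_{t+1}]` is reached by an admissible control from
`s' = max(S⁻_t, (s - x̄_t Δt) / α) ∈ [S⁻_t, S⁺_t]`. Tracing back from `S⁺_d` to
`S⁻_0 = S⁺_0 = S_init` gives a feasible trajectory; a forward greedy choice would not do, since a
state in `[S⁻_t, S⁺_t]` may have no feasible successor.
-/

/-- The recursive storage state. -/
def stateOf {d : ℕ} (α Δt Sinit : ℝ) (x : Fin d → ℝ) : ℕ → ℝ
  | 0 => Sinit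
  | t + 1 => α * stateOf α Δt Sinit x t + (if h : t < d then x ⟨t, h⟩ else 0) * Δt

theorem forall_le_of_fin_succ {d : ℕ} {P : ℕ → Prop} (h0 : P 0)
    (hsucc : ∀ t : Fin d, P t → P (t + 1)) : ∀ t ≤ d, P t :=
  fun t ht => Fin.induction (motive := fun i => P i) h0 (fun i => hsucc i)
    ⟨t, Nat.lt_succ_of_le ht⟩

theorem exists_predecessor_mem_Icc {α a b m M s : ℝ} (hα : 0 < α) (hab : a ≤ b) (hmM : m ≤ M)
    (hs_lo : α * m + a ≤ s) (hs_hi : s ≤ α * M + b) :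
    ∃ s' ∈ Set.Icc m M, α * s' + a ≤ s ∧ s ≤ α * s' + b := by
  refine ⟨max m ((s - b) / α), ⟨le_max_left _ _, max_le hmM ?_⟩, ?_, ?_⟩
  · rw [div_le_iff₀ hα]; linarith
  · rcases le_total m ((s - b) / α) with h | h
    · rw [max_eq_right h, mul_div_cancel₀ _ hα.ne']; linarith
    · rw [max_eq_left h]; exact hs_lo
  · have := (div_le_iff₀' hα).mp (le_max_right m ((s - b) / α)); linarith

section Storage

variable {d : ℕ} {α Δt Sinit : ℝ} {xlo xhi : Fin d → ℝ} {Slo Shi Sminus Splus : ℕ → ℝ}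

theorem stateOf_succ_fin (x : Fin d → ℝ) (t : Fin d) :
    stateOf α Δt Sinit x (t + 1) = α * stateOf α Δt Sinit x t + x t * Δt := by
  simp [stateOf, t.isLt]

theorem stateOf_eq_of_recursion {x : Fin d → ℝ} {S : ℕ → ℝ} (hS0 : S 0 = Sinit)
    (hS : ∀ t : Fin d, S (t + 1) = α * S t + x t * Δt) :
    ∀ t ≤ d, stateOf α Δt Sinit x t = S t :=
  forall_le_of_fin_succ (hS0 ▸ rfl) fun t ih => by rw [stateOf_succ_fin, ih, hS]

theorem exists_control_of_path (hΔt : 0 < Δt) {S : ℕ → ℝ} (hS0 : S 0 = Sinit)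
    (hstep : ∀ t : Fin d, α * S t + xlo t * Δt ≤ S (t + 1) ∧ S (t + 1) ≤ α * S t + xhi t * Δt) :
    ∃ x : Fin d → ℝ, (∀ t, xlo t ≤ x t ∧ x t ≤ xhi t) ∧
      ∀ t ≤ d, stateOf α Δt Sinit x t = S t := by
  refine ⟨fun t => (S (t + 1) - α * S t) / Δt, fun t => ⟨?_, ?_⟩, ?_⟩
  · rw [le_div_iff₀ hΔt]; linarith [hstep t]
  · rw [div_le_iff₀ hΔt]; linarith [hstep t]
  · refine stateOf_eq_of_recursion hS0 fun t => ?_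
    rw [div_mul_cancel₀ _ hΔt.ne']; ring

variable (α Δt Sinit) in
structure IsGreedyMax (xhi : Fin d → ℝ) (Shi S : ℕ → ℝ) : Prop where
  zero : S 0 = Sinit
  succ : ∀ t : Fin d, S (t + 1) = min (Shi (t + 1)) (α * S t + xhi t * Δt)

variable (α Δt Sinit) in
structure IsGreedyMin (xlo : Fin d → ℝ) (Slo S : ℕ → ℝ) : Prop where
  zero : S 0 = Sinit
  succ : ∀ t : Fin d, S (t + 1) = max (Slo (t + 1)) (α * S t + xlo t * Δt)

theorem IsGreedyMax.le_upper (h : IsGreedyMax α Δt Sinit xhi Shi Splus) (h0 : Sinit ≤ Shi 0) :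
    ∀ t ≤ d, Splus t ≤ Shi t :=
  forall_le_of_fin_succ (h.zero ▸ h0) fun t _ => (h.succ t).trans_le (min_le_left _ _)

theorem IsGreedyMin.lower_le (h : IsGreedyMin α Δt Sinit xlo Slo Sminus) (h0 : Slo 0 ≤ Sinit) :
    ∀ t ≤ d, Slo t ≤ Sminus t :=
  forall_le_of_fin_succ (h.zero ▸ h0) fun t _ => (le_max_left _ _).trans_eq (h.succ t).symm

theorem IsGreedyMax.stateOf_le (hα : 0 ≤ α) (hΔt : 0 ≤ Δt)
    (h : IsGreedyMax α Δt Sinit xhi Shi Splus) {x : Fin d → ℝ} (hx : ∀ t, x t ≤ xhi t)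
    (hS : ∀ t ≤ d, stateOf α Δt Sinit x t ≤ Shi t) :
    ∀ t ≤ d, stateOf α Δt Sinit x t ≤ Splus t := by
  refine forall_le_of_fin_succ (by rw [h.zero]; rfl) fun t ih => ?_
  rw [h.succ, stateOf_succ_fin]
  refine le_min ((stateOf_succ_fin x t).symm.trans_le (hS _ t.isLt)) ?_
  gcongr
  exact hx t

theorem IsGreedyMin.le_stateOf (hα : 0 ≤ α) (hΔt : 0 ≤ Δt)
    (h : IsGreedyMin α Δt Sinit xlo Slo Sminus) {x : Fin d → ℝ} (hx : ∀ t, xlo t ≤ x t)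
    (hS : ∀ t ≤ d, Slo t ≤ stateOf α Δt Sinit x t) :
    ∀ t ≤ d, Sminus t ≤ stateOf α Δt Sinit x t := by
  refine forall_le_of_fin_succ (by rw [h.zero]; rfl) fun t ih => ?_
  rw [h.succ, stateOf_succ_fin]
  refine max_le ((hS _ t.isLt).trans_eq (stateOf_succ_fin x t)) ?_
  gcongr
  exact hx t

theorem IsGreedyMin.le_isGreedyMax (hα : 0 ≤ α) (hΔt : 0 ≤ Δt) (hx : ∀ t, xlo t ≤ xhi t)
    (hmin : IsGreedyMin α Δt Sinit xlo Slo Sminus) (hmax : IsGreedyMax α Δt Sinit xhi Shi Splus)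
    (hG : ∀ t ≤ d, Slo t ≤ Splus t ∧ Sminus t ≤ Shi t) :
    ∀ t ≤ d, Sminus t ≤ Splus t := by
  refine forall_le_of_fin_succ (by rw [hmin.zero, hmax.zero]) fun t ih => ?_
  obtain ⟨hlo, hhi⟩ := hG _ t.isLt
  rw [hmax.succ] at hlo ⊢
  rw [hmin.succ] at hhi ⊢
  refine max_le hlo (le_min (max_le_iff.mp hhi).2 ?_)
  gcongr
  exact hx t

theorem exists_path_of_mem_greedy_interval (hα : 0 < α) (hΔt : 0 ≤ Δt)
    (hx : ∀ t, xlo t ≤ xhi t) (hmin : IsGreedyMin α Δt Sinit xlo Slo Sminus)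
    (hmax : IsGreedyMax α Δt Sinit xhi Shi Splus) (hle : ∀ t ≤ d, Sminus t ≤ Splus t) :
    ∀ n ≤ d, ∀ s ∈ Set.Icc (Sminus n) (Splus n), ∃ S : ℕ → ℝ, S 0 = Sinit ∧ S n = s ∧
      (∀ t : Fin d, (t : ℕ) < n →
        α * S t + xlo t * Δt ≤ S (t + 1) ∧ S (t + 1) ≤ α * S t + xhi t * Δt) ∧
      ∀ t ≤ n, Sminus t ≤ S t ∧ S t ≤ Splus t := by
  refine forall_le_of_fin_succ ?_ fun n ih s hs => ?_
  · rintro s ⟨hs_lo, hs_hi⟩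
    rw [hmin.zero] at hs_lo
    rw [hmax.zero] at hs_hi
    obtain rfl : s = Sinit := le_antisymm hs_hi hs_lo
    refine ⟨fun _ => s, rfl, rfl, fun t ht => absurd ht (Nat.not_lt_zero _), fun t ht => ?_⟩
    obtain rfl := Nat.le_zero.mp ht
    exact ⟨hmin.zero.le, hmax.zero.ge⟩
  obtain ⟨s', hs', hs'_lo, hs'_hi⟩ := exists_predecessor_mem_Icc hα
    (mul_le_mul_of_nonneg_right (hx n) hΔt) (hle n n.isLt.le)
    ((le_max_right _ _).trans ((hmin.succ n).symm.trans_le hs.1))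
    (hs.2.trans ((hmax.succ n).trans_le (min_le_right _ _)))
  obtain ⟨S, hS0, hSn, hstep, hmem⟩ := ih s' hs'
  refine ⟨Function.update S (n + 1) s, by simp [hS0], by simp, fun t ht => ?_, fun t ht => ?_⟩
  · rcases (Nat.lt_succ_iff.mp ht).lt_or_eq with ht | ht
    · simpa [Function.update_apply, (ht.trans n.val.lt_succ_self).ne, ht.ne]
        using hstep t ht
    · obtain rfl : t = n := Fin.ext ht
      simpa [hSn] using ⟨hs'_lo, hs'_hi⟩
  · rcases (Nat.le_succ_iff.mp ht) with ht | rfl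
    · simpa [Function.update_apply, (Nat.lt_succ_of_le ht).ne] using hmem t ht
    · simpa using hs

end Storage

theorem storage_feasible_nonempty_iff_greedy_general (d : ℕ) (Δt α Sinit : ℝ)
    (hΔt : 0 < Δt) (hα : α ∈ Set.Ioc (0 : ℝ) 1)
    (xlo xhi : Fin d → ℝ) (hx : ∀ t, xlo t ≤ xhi t)
    (Slo Shi : ℕ → ℝ)
    (Splus Sminus : ℕ → ℝ)
    (hSplus0 : Splus 0 = Sinit) (hSminus0 : Sminus 0 = Sinit)
    (hSplus : ∀ t : Fin d, Splus ((t : ℕ) + 1) =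
      min (Shi ((t : ℕ) + 1)) (α * Splus (t : ℕ) + xhi t * Δt))
    (hSminus : ∀ t : Fin d, Sminus ((t : ℕ) + 1) =
      max (Slo ((t : ℕ) + 1)) (α * Sminus (t : ℕ) + xlo t * Δt)) :
    {x : Fin d → ℝ |
        (∀ t, xlo t ≤ x t ∧ x t ≤ xhi t) ∧
        (∀ t ≤ d, Slo t ≤ stateOf α Δt Sinit x t ∧ stateOf α Δt Sinit x t ≤ Shi t)}.Nonempty
      ↔ (∀ t ≤ d, Slo t ≤ Splus t ∧ Sminus t ≤ Shi t) := by
  have hmax : IsGreedyMax α Δt Sinit xhi Shi Splus := ⟨hSplus0, hSplus⟩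
  have hmin : IsGreedyMin α Δt Sinit xlo Slo Sminus := ⟨hSminus0, hSminus⟩
  constructor
  · rintro ⟨x, hxb, hxS⟩ t ht
    have hup := hmax.stateOf_le hα.1.le hΔt.le (fun t => (hxb t).2) (fun t ht => (hxS t ht).2)
    have hdown := hmin.le_stateOf hα.1.le hΔt.le (fun t => (hxb t).1) (fun t ht => (hxS t ht).1)
    exact ⟨(hxS t ht).1.trans (hup t ht), (hdown t ht).trans (hxS t ht).2⟩
  · intro hG
    have hle := hmin.le_isGreedyMax hα.1.le hΔt.le hx hmax hG
    obtain ⟨S, hS0, -, hstep, hmem⟩ := exists_path_of_mem_greedy_interval hα.1 hΔt.le hx hmin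
      hmax hle d le_rfl (Splus d) ⟨hle d le_rfl, le_rfl⟩
    obtain ⟨x, hxb, hxS⟩ := exists_control_of_path hΔt hS0 fun t => hstep t t.isLt
    have hlo := hmin.lower_le ((hG 0 d.zero_le).1.trans_eq hSplus0)
    have hhi := hmax.le_upper (hSminus0.symm.trans_le (hG 0 d.zero_le).2)
    refine ⟨x, hxb, fun t ht => ?_⟩
    rw [hxS t ht]
    exact ⟨(hlo t ht).trans (hmem t ht).1, (hmem t ht).2.trans (hhi t ht)⟩

/-- The storage feasible set is nonempty iff the greedy maximal trajectory satisfies all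
lower energy bounds and the greedy minimal trajectory satisfies all upper energy bounds,
under `x̲ ≤ x̄` and consistency of the interval bounds. -/
theorem storage_feasible_nonempty_iff_greedy (d : ℕ) (Δt α Sinit : ℝ)
    (hΔt : 0 < Δt) (hα : α ∈ Set.Ioc (0 : ℝ) 1)
    (xlo xhi : Fin d → ℝ) (hx : ∀ t, xlo t ≤ xhi t)
    (Slo Shi : ℕ → ℝ)
    (hconsistent : ∀ t : Fin d,
      max (Slo ((t : ℕ) + 1)) (α * Slo (t : ℕ) + xlo t * Δt) ≤
        min (Shi ((t : ℕ) + 1)) (α * Shi (t : ℕ) + xhi t * Δt))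
    (Splus Sminus : ℕ → ℝ)
    (hSplus0 : Splus 0 = Sinit) (hSminus0 : Sminus 0 = Sinit)
    (hSplus : ∀ t : Fin d, Splus ((t : ℕ) + 1) =
      min (Shi ((t : ℕ) + 1)) (α * Splus (t : ℕ) + xhi t * Δt))
    (hSminus : ∀ t : Fin d, Sminus ((t : ℕ) + 1) =
      max (Slo ((t : ℕ) + 1)) (α * Sminus (t : ℕ) + xlo t * Δt)) :
    {x : Fin d → ℝ |
        (∀ t, xlo t ≤ x t ∧ x t ≤ xhi t) ∧
        (∀ t ≤ d, Slo t ≤ stateOf α Δt Sinit x t ∧ stateOf α Δt Sinit x t ≤ Shi t)}.Nonempty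
      ↔ (∀ t ≤ d, Slo t ≤ Splus t ∧ Sminus t ≤ Shi t) :=
  storage_feasible_nonempty_iff_greedy_general d Δt α Sinit hΔt hα xlo xhi hx Slo Shi Splus Sminus
    hSplus0 hSminus0 hSplus hSminus
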